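/- arXiv:2602.09457 — 6 statements merged into one kernel-verified Lean document; each statement's English description precedes it below -/
import Mathlib

section
/- (Adaptive ε telescoping lemma) Let φ : ℝ≥0 → ℝ≥0 ∪ {+∞} be proper lower-semicontinuous with concave conjugate φ* and minimizer selection ε_min. Let (O_t)_{t=1}^T be non-negative reals, A_0 > 0, and define A_t = A_0 + Σ_{s=1}^t O_s/s, H_t = Σ_{s=1}^t 1/s, u_t = A_t/H_t, ε_t = ε_min(u_t). Then Σ_{t=1}^T ( (O_t/t)·ε_t + φ(ε_t)/t ) ≤ H_T · φ*(u_T). -/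
open scoped ENNReal NNReal
open Finset

/-- Concave conjugate of `φ : ℝ≥0 → ℝ≥0∞`: `φ*(u) = ⨅ ε ≥ 0, u·ε + φ(ε)`. -/
noncomputable def concaveConj (φ : ℝ≥0 → ℝ≥0∞) (u : ℝ≥0) : ℝ≥0∞ :=
  ⨅ ε : ℝ≥0, ((u * ε : ℝ≥0) : ℝ≥0∞) + φ ε

/-- Adaptive `ε` telescoping lemma: with `A_t = A_0 + Σ_{s≤t} O_s/s`,
`H_t = Σ_{s≤t} 1/s`, `u_t = A_t/H_t`, and `ε_t = ε_min(u_t)` a minimizer of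
`ε ↦ u_t ε + φ(ε)`, we have
`Σ_{t=1}^T ((O_t/t)·ε_t + φ(ε_t)/t) ≤ H_T · φ*(u_T)`. -/
theorem adaptive_eps_telescoping (φ : ℝ≥0 → ℝ≥0∞)
    (hproper : ∃ ε : ℝ≥0, φ ε ≠ ⊤) (hlsc : LowerSemicontinuous φ)
    (εmin : ℝ≥0 → ℝ≥0)
    (hεmin : ∀ u : ℝ≥0, 0 < u →
      ((u * εmin u : ℝ≥0) : ℝ≥0∞) + φ (εmin u) = concaveConj φ u)
    (T : ℕ) (O : ℕ → ℝ≥0) (A0 : ℝ≥0) (hA0 : 0 < A0)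
    (A H u : ℕ → ℝ≥0) (e : ℕ → ℝ≥0)
    (hA : ∀ t, A t = A0 + ∑ s ∈ Icc 1 t, O s / (s : ℝ≥0))
    (hH : ∀ t, H t = ∑ s ∈ Icc 1 t, ((s : ℝ≥0))⁻¹)
    (hu : ∀ t, u t = A t / H t)
    (he : ∀ t, e t = εmin (u t)) :
    ∑ t ∈ Icc 1 T,
        (((O t / (t : ℝ≥0) : ℝ≥0) : ℝ≥0∞) * (e t : ℝ≥0∞) + φ (e t) / (t : ℝ≥0∞)) ≤
      ((H T : ℝ≥0) : ℝ≥0∞) * concaveConj φ (u T) := by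
  induction T with
  | zero => simp
  | succ T ih =>
    have hle : 1 ≤ T + 1 := Nat.le_add_left 1 T
    have htn : ((T + 1 : ℕ) : ℝ≥0) ≠ 0 := by exact_mod_cast Nat.succ_ne_zero T
    have hH1 : H (T + 1) = H T + (((T + 1 : ℕ)) : ℝ≥0)⁻¹ := by
      rw [hH, hH, Finset.sum_Icc_succ_top hle]
    have hA1 : A (T + 1) = A T + O (T + 1) / (((T + 1 : ℕ)) : ℝ≥0) := by
      rw [hA, hA, Finset.sum_Icc_succ_top hle, ← add_assoc]
    have hHne : H (T + 1) ≠ 0 := by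
      rw [hH1]
      intro h
      exact htn (inv_eq_zero.mp (add_eq_zero.mp h).2)
    have hAne : A (T + 1) ≠ 0 := by
      rw [hA]
      intro h
      exact hA0.ne' (add_eq_zero.mp h).1
    have hupos : 0 < u (T + 1) := by
      rw [hu]
      exact div_pos (pos_iff_ne_zero.mpr hAne) (pos_iff_ne_zero.mpr hHne)
    have hconj : ((u (T + 1) * e (T + 1) : ℝ≥0) : ℝ≥0∞) + φ (e (T + 1)) =
        concaveConj φ (u (T + 1)) := by
      rw [he]; exact hεmin _ hupos
    have hconjle : concaveConj φ (u T) ≤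
        ((u T * e (T + 1) : ℝ≥0) : ℝ≥0∞) + φ (e (T + 1)) := iInf_le _ _
    have hHuA : H T * u T ≤ A T := by
      by_cases h0 : H T = 0
      · simp [h0]
      · rw [hu, mul_comm]
        exact (div_mul_cancel₀ _ h0).le
    have hHuA1 : H (T + 1) * u (T + 1) = A (T + 1) := by
      rw [hu, mul_comm]
      exact div_mul_cancel₀ _ hHne
    rw [Finset.sum_Icc_succ_top hle]
    set en := e (T + 1) with hen
    set φe := φ en with hφe
    have hcastH : ((H (T + 1) : ℝ≥0) : ℝ≥0∞) =
        ((H T : ℝ≥0) : ℝ≥0∞) + (((T + 1 : ℕ)) : ℝ≥0∞)⁻¹ := by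
      rw [hH1, ENNReal.coe_add, ENNReal.coe_inv htn, ENNReal.coe_natCast]
    calc ∑ t ∈ Icc 1 T,
          (((O t / (t : ℝ≥0) : ℝ≥0) : ℝ≥0∞) * (e t : ℝ≥0∞) + φ (e t) / (t : ℝ≥0∞)) +
          (((O (T + 1) / ((T + 1 : ℕ) : ℝ≥0) : ℝ≥0) : ℝ≥0∞) * (en : ℝ≥0∞) +
            φe / ((T + 1 : ℕ) : ℝ≥0∞))
        ≤ ((H T : ℝ≥0) : ℝ≥0∞) * concaveConj φ (u T) +
          (((O (T + 1) / ((T + 1 : ℕ) : ℝ≥0) : ℝ≥0) : ℝ≥0∞) * (en : ℝ≥0∞) +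
            φe / ((T + 1 : ℕ) : ℝ≥0∞)) := by
          exact add_le_add_left ih _
      _ ≤ ((H T : ℝ≥0) : ℝ≥0∞) * (((u T * en : ℝ≥0) : ℝ≥0∞) + φe) +
          (((O (T + 1) / ((T + 1 : ℕ) : ℝ≥0) : ℝ≥0) : ℝ≥0∞) * (en : ℝ≥0∞) +
            φe / ((T + 1 : ℕ) : ℝ≥0∞)) := by
          gcongr
      _ = (((H T * (u T * en) : ℝ≥0) : ℝ≥0∞) +
            ((O (T + 1) / ((T + 1 : ℕ) : ℝ≥0) * en : ℝ≥0) : ℝ≥0∞)) +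
          (((H T : ℝ≥0) : ℝ≥0∞) * φe + (((T + 1 : ℕ)) : ℝ≥0∞)⁻¹ * φe) := by
          rw [ENNReal.div_eq_inv_mul]
          push_cast
          ring
      _ ≤ (((A (T + 1) * en : ℝ≥0) : ℝ≥0∞)) +
          (((H T : ℝ≥0) : ℝ≥0∞) * φe + (((T + 1 : ℕ)) : ℝ≥0∞)⁻¹ * φe) := by
          gcongr
          rw [← ENNReal.coe_add, ENNReal.coe_le_coe]
          calc H T * (u T * en) + O (T + 1) / ((T + 1 : ℕ) : ℝ≥0) * en
              = (H T * u T + O (T + 1) / ((T + 1 : ℕ) : ℝ≥0)) * en := by ring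
            _ ≤ A (T + 1) * en := by
                rw [hA1]
                exact mul_le_mul_left (add_le_add_left hHuA _) _
      _ = ((H (T + 1) : ℝ≥0) : ℝ≥0∞) * (((u (T + 1) * en : ℝ≥0) : ℝ≥0∞) + φe) := by
          rw [mul_add, ← ENNReal.coe_mul, ← mul_assoc, hHuA1, hcastH, add_mul]
      _ = ((H (T + 1) : ℝ≥0) : ℝ≥0∞) * concaveConj φ (u (T + 1)) := by rw [hconj]
end

section
/- (Random-order bound on sum of average optima) Let x_1,…,x_T be a uniformly random ordering of a fixed multiset X of elements of a space 𝒳, let ℓ : Θ × 𝒳 → [0,1], and define OPT_t = min_{θ∈Θ} Σ_{i=1}^t ℓ(θ, x_i) (assume the minimum is attained). Then E[Σ_{t=1}^T OPT_t / t] ≤ OPT_T, where OPT_T = min_{θ∈Θ} Σ_{x∈X} ℓ(θ,x) is deterministic. -/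
open Finset

lemma card_filter_lt' (n t : ℕ) (ht : t ≤ n) :
    (Finset.univ.filter (fun i : Fin n => (i:ℕ) < t)).card = t := by
  have := Finset.card_bij' (s := Finset.univ.filter (fun i : Fin n => (i:ℕ) < t))
    (t := Finset.range t) (fun i _ => (i : ℕ))
    (fun j hj => (⟨j, lt_of_lt_of_le (Finset.mem_range.mp hj) ht⟩ : Fin n))
    (by intro i hi; simpa using (Finset.mem_filter.mp hi).2)
    (by intro j hj; simp [Finset.mem_range.mp hj])
    (by intro i hi; simp) (by intro j hj; simp)
  simpa using this

lemma sum_perm_apply {n : ℕ} (f : Fin (n+1) → ℝ) (i : Fin (n+1)) :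
    ∑ σ : Equiv.Perm (Fin (n+1)), f (σ i)
      = (Fintype.card (Equiv.Perm (Fin n)) : ℝ) * ∑ j, f j := by
  have h0 : ∑ σ : Equiv.Perm (Fin (n+1)), f (σ 0)
      = ∑ σ : Equiv.Perm (Fin (n+1)), f (σ i) := by
    apply Fintype.sum_equiv (Equiv.mulRight (Equiv.swap 0 i))
    intro σ
    simp [Equiv.Perm.mul_apply]
  rw [← h0, ← Equiv.sum_comp (Equiv.Perm.decomposeFin (n := n)).symm
      (fun σ => f (σ 0)), Fintype.sum_prod_type]
  simp only [Equiv.Perm.decomposeFin_symm_apply_zero, Finset.sum_const,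
    nsmul_eq_mul, Finset.card_univ]
  rw [Finset.mul_sum]

/-- Random-order bound on the sum of average optima: if `x_1,…,x_T` is a uniformly
random ordering of a fixed multiset (here encoded by a fixed listing `x` composed with
a uniformly random permutation `σ`), `ℓ : Θ × 𝒳 → [0,1]`, and
`OPT_t(σ) = inf_θ Σ_{i=1}^t ℓ(θ, x_{σ(i)})`, then
`E_σ[Σ_{t=1}^T OPT_t/t] ≤ OPT_T`, where `OPT_T = inf_θ Σ_{x∈X} ℓ(θ,x)` is deterministic. -/
theorem random_order_sum_avg_opt {Θ 𝒳 : Type*} [Nonempty Θ]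
    (T : ℕ) (hT : 1 ≤ T) (ℓ : Θ → 𝒳 → ℝ)
    (hℓ : ∀ θ x', ℓ θ x' ∈ Set.Icc (0 : ℝ) 1) (x : Fin T → 𝒳) :
    (∑ σ : Equiv.Perm (Fin T), ∑ t ∈ Icc 1 T,
        (⨅ θ : Θ, ∑ i ∈ Finset.univ.filter (fun i : Fin T => (i : ℕ) < t),
          ℓ θ (x (σ i))) / (t : ℝ)) / (Fintype.card (Equiv.Perm (Fin T)) : ℝ) ≤
      ⨅ θ : Θ, ∑ i : Fin T, ℓ θ (x i) := by
  obtain ⟨n, rfl⟩ : ∃ n, T = n + 1 := ⟨T - 1, by omega⟩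
  have hC : (0:ℝ) < (Fintype.card (Equiv.Perm (Fin (n+1))) : ℝ) := by
    exact_mod_cast Fintype.card_pos
  apply le_ciInf
  intro θ
  rw [div_le_iff₀ hC]
  calc ∑ σ : Equiv.Perm (Fin (n+1)), ∑ t ∈ Icc 1 (n+1),
        (⨅ θ : Θ, ∑ i ∈ Finset.univ.filter (fun i : Fin (n+1) => (i : ℕ) < t),
          ℓ θ (x (σ i))) / (t : ℝ)
      ≤ ∑ σ : Equiv.Perm (Fin (n+1)), ∑ t ∈ Icc 1 (n+1),
        (∑ i ∈ Finset.univ.filter (fun i : Fin (n+1) => (i : ℕ) < t),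
          ℓ θ (x (σ i))) / (t : ℝ) := by
        apply Finset.sum_le_sum; intro σ _
        apply Finset.sum_le_sum; intro t ht
        have ht1 : 1 ≤ t := (Finset.mem_Icc.mp ht).1
        have htpos : (0:ℝ) < t := by exact_mod_cast ht1
        rw [div_le_div_iff_of_pos_right htpos]
        apply ciInf_le
        refine ⟨0, ?_⟩
        rintro y ⟨θ', rfl⟩
        exact Finset.sum_nonneg fun i _ => (hℓ θ' (x (σ i))).1
    _ = ∑ t ∈ Icc 1 (n+1), (∑ σ : Equiv.Perm (Fin (n+1)),
          ∑ i ∈ Finset.univ.filter (fun i : Fin (n+1) => (i : ℕ) < t),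
          ℓ θ (x (σ i))) / (t : ℝ) := by
        rw [Finset.sum_comm]
        simp [Finset.sum_div]
    _ = ∑ t ∈ Icc 1 (n+1), ((t : ℝ) * ((Fintype.card (Equiv.Perm (Fin n)) : ℝ)
          * ∑ j, ℓ θ (x j))) / (t : ℝ) := by
        apply Finset.sum_congr rfl
        intro t ht
        congr 1
        rw [Finset.sum_comm]
        have : ∀ i : Fin (n+1), ∑ σ : Equiv.Perm (Fin (n+1)), ℓ θ (x (σ i))
            = (Fintype.card (Equiv.Perm (Fin n)) : ℝ) * ∑ j, ℓ θ (x j) :=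
          fun i => sum_perm_apply (fun j => ℓ θ (x j)) i
        rw [Finset.sum_congr rfl (fun i _ => this i), Finset.sum_const,
          card_filter_lt' (n+1) t (Finset.mem_Icc.mp ht).2, nsmul_eq_mul]
    _ = (⨅ _ : Θ, ∑ i : Fin (n+1), ℓ θ (x i)) * 0 + (∑ i : Fin (n+1), ℓ θ (x i))
          * (Fintype.card (Equiv.Perm (Fin (n+1))) : ℝ) := by
        simp only [ciInf_const, mul_zero, zero_add]
        have : ∀ t ∈ Icc 1 (n+1), ((t : ℝ) * ((Fintype.card (Equiv.Perm (Fin n)) : ℝ)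
            * ∑ j, ℓ θ (x j))) / (t : ℝ)
            = (Fintype.card (Equiv.Perm (Fin n)) : ℝ) * ∑ j, ℓ θ (x j) := by
          intro t ht
          have ht1 : 1 ≤ t := (Finset.mem_Icc.mp ht).1
          have : (t:ℝ) ≠ 0 := by positivity
          field_simp
        rw [Finset.sum_congr rfl this, Finset.sum_const, Nat.card_Icc]
        simp [Fintype.card_perm, Nat.factorial_succ]
        ring
    _ ≤ _ := by simp
end

section
/- (Exchangeability of held-out points) Let x_1,…,x_{t+1} be a uniformly random ordering of a fixed multiset of size at least t+1. Sample I uniformly from {1,…,t} independently, and let U = {x_1,…,x_t} \ {x_I}. Then for any bounded measurable function g of a pair (multiset, point), E[g(U, x_I)] = E[g(U, x_{t+1})]. -/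
open Finset

/-- Exchangeability of held-out points: let `y ∘ σ` (for a uniformly random permutation
`σ` of `Fin N`, `N ≥ t+1`) be a uniformly random ordering of a fixed multiset, let `I`
be uniform on the first `t` positions, and let `U` be the multiset of the first `t`
points with the `I`-th point removed.  Then for any function `g` of a pair
(multiset, point), `E[g(U, x_I)] = E[g(U, x_{t+1})]` (expectations written as sums over
the uniform randomness, with the common normalization cancelled). -/
theorem exchangeability_heldout {𝒳 : Type*} [DecidableEq 𝒳] (N t : ℕ) (ht : 1 ≤ t) (htN : t < N)
    (y : Fin N → 𝒳) (g : Multiset 𝒳 → 𝒳 → ℝ) :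
    (∑ σ : Equiv.Perm (Fin N),
        ∑ i ∈ Finset.univ.filter (fun j : Fin N => (j : ℕ) < t),
          g ((Multiset.map (fun j => y (σ j))
                ((Finset.univ.filter (fun j : Fin N => (j : ℕ) < t)).val)).erase
              (y (σ i)))
            (y (σ i))) =
    (∑ σ : Equiv.Perm (Fin N),
        ∑ i ∈ Finset.univ.filter (fun j : Fin N => (j : ℕ) < t),
          g ((Multiset.map (fun j => y (σ j))
                ((Finset.univ.filter (fun j : Fin N => (j : ℕ) < t)).val)).erase
              (y (σ i)))
            (y (σ ⟨t, htN⟩))) := by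
  classical
  set s := Finset.univ.filter (fun j : Fin N => (j : ℕ) < t) with hs
  set T : Fin N := ⟨t, htN⟩ with hT
  conv_lhs => rw [Finset.sum_comm]
  conv_rhs => rw [Finset.sum_comm]
  refine Finset.sum_congr rfl fun i hi => ?_
  have hilt : (i : ℕ) < t := (Finset.mem_filter.mp hi).2
  have hmem : i ∈ s.val := hi
  have hTnot : T ∉ s.val.erase i := by
    intro h
    have h2 := Finset.mem_filter.mp (Multiset.mem_of_mem_erase h)
    simp [hT] at h2
  have hinot : i ∉ s.val.erase i := (Finset.nodup s).not_mem_erase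
  rw [← Equiv.sum_comp (Equiv.mulRight (Equiv.swap i T))]
  refine Finset.sum_congr rfl fun σ _ => ?_
  simp only [Equiv.coe_mulRight]
  have key : ∀ (τ : Equiv.Perm (Fin N)),
      Multiset.map (fun j => y (τ j)) s.val
        = y (τ i) ::ₘ Multiset.map (fun j => y (τ j)) (s.val.erase i) := by
    intro τ
    conv_lhs => rw [← Multiset.cons_erase hmem]
    rw [Multiset.map_cons]
  have hcongr : Multiset.map (fun j => y ((σ * Equiv.swap i T) j)) (s.val.erase i)
      = Multiset.map (fun j => y (σ j)) (s.val.erase i) := by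
    refine Multiset.map_congr rfl fun j hj => ?_
    have hji : j ≠ i := fun h => hinot (h ▸ hj)
    have hjT : j ≠ T := fun h => hTnot (h ▸ hj)
    simp [Equiv.Perm.mul_apply, Equiv.swap_apply_of_ne_of_ne hji hjT]
  have h1 : (σ * Equiv.swap i T) i = σ T := by
    simp [Equiv.Perm.mul_apply]
  rw [key (σ * Equiv.swap i T), key σ, hcongr, h1,
    Multiset.erase_cons_head, Multiset.erase_cons_head]
end

section
/- (Conditional decomposition of total variation) Let Ω = 𝒵 × 𝒲 where 𝒵 is finite with the discrete σ-algebra and 𝒲 is a measurable space. Let P, Q be probability measures on Ω with marginals P_Z, Q_Z on 𝒵 and conditionals P_{W|Z=z}, Q_{W|Z=z} on 𝒲. Then TV(P,Q) ≤ TV(P_Z, Q_Z) + Σ_{z∈𝒵} min{P_Z(z), Q_Z(z)} · TV(P_{W|Z=z}, Q_{W|Z=z}). -/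
open MeasureTheory

/-- Total variation distance `TV(P,Q) = sup_{A measurable} |P(A) − Q(A)|`. -/
noncomputable def tvDist {Ω : Type*} [MeasurableSpace Ω] (P Q : Measure Ω) : ℝ :=
  ⨆ s : {s : Set Ω // MeasurableSet s}, |(P s.1).toReal - (Q s.1).toReal|

lemma tvDist_bddAbove {Ω : Type*} [MeasurableSpace Ω] (P Q : Measure Ω)
    [IsProbabilityMeasure P] [IsProbabilityMeasure Q] :
    BddAbove (Set.range fun s : {s : Set Ω // MeasurableSet s} =>
      |(P s.1).toReal - (Q s.1).toReal|) := by
  refine ⟨1, ?_⟩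
  rintro x ⟨s, rfl⟩
  have h1 : (P s.1).toReal ≤ 1 := by
    simpa using ENNReal.toReal_mono (by simp) (prob_le_one (μ := P) (s := s.1))
  have h2 : (Q s.1).toReal ≤ 1 := by
    simpa using ENNReal.toReal_mono (by simp) (prob_le_one (μ := Q) (s := s.1))
  have h3 : 0 ≤ (P s.1).toReal := ENNReal.toReal_nonneg
  have h4 : 0 ≤ (Q s.1).toReal := ENNReal.toReal_nonneg
  rw [abs_le]
  constructor <;> linarith

lemma le_tvDist {Ω : Type*} [MeasurableSpace Ω] (P Q : Measure Ω)
    [IsProbabilityMeasure P] [IsProbabilityMeasure Q] {s : Set Ω} (hs : MeasurableSet s) :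
    |(P s).toReal - (Q s).toReal| ≤ tvDist P Q :=
  le_ciSup (tvDist_bddAbove P Q) (⟨s, hs⟩ : {s : Set Ω // MeasurableSet s})

/-- The key real-valued inequality. -/
lemma real_key {ι : Type*} [Fintype ι] (a b f g tz : ι → ℝ) (T : ℝ)
    (ha : ∀ z, 0 ≤ a z) (hb : ∀ z, 0 ≤ b z)
    (hf0 : ∀ z, 0 ≤ f z) (hf1 : ∀ z, f z ≤ 1)
    (hg0 : ∀ z, 0 ≤ g z) (hg1 : ∀ z, g z ≤ 1)
    (hT1 : ∑ z ∈ Finset.univ.filter (fun z => b z < a z), (a z - b z) ≤ T)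
    (hT2 : ∑ z ∈ Finset.univ.filter (fun z => a z < b z), (b z - a z) ≤ T)
    (htz : ∀ z, |f z - g z| ≤ tz z) :
    |∑ z, a z * f z - ∑ z, b z * g z| ≤ T + ∑ z, min (a z) (b z) * tz z := by
  classical
  set m : ι → ℝ := fun z => min (a z) (b z) with hm
  have hm0 : ∀ z, 0 ≤ m z := fun z => le_min (ha z) (hb z)
  have hma : ∀ z, m z ≤ a z := fun z => min_le_left _ _
  have hmb : ∀ z, m z ≤ b z := fun z => min_le_right _ _
  have hsum_am : ∑ z, (a z - m z) = ∑ z ∈ Finset.univ.filter (fun z => b z < a z), (a z - b z) := by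
    rw [← Finset.sum_filter_add_sum_filter_not Finset.univ (fun z => b z < a z)
      (fun z => a z - m z)]
    have e1 : ∑ z ∈ Finset.univ.filter (fun z => b z < a z), (a z - m z) =
        ∑ z ∈ Finset.univ.filter (fun z => b z < a z), (a z - b z) :=
      Finset.sum_congr rfl fun z hz => by
        rw [hm]; simp only
        rw [min_eq_right (le_of_lt (Finset.mem_filter.mp hz).2)]
    have e2 : ∑ z ∈ Finset.univ.filter (fun z => ¬ b z < a z), (a z - m z) = 0 :=
      Finset.sum_eq_zero fun z hz => by
        have hle : a z ≤ b z := not_lt.mp (Finset.mem_filter.mp hz).2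
        rw [hm]; simp only
        rw [min_eq_left hle, sub_self]
    rw [e1, e2, add_zero]
  have hsum_bm : ∑ z, (b z - m z) = ∑ z ∈ Finset.univ.filter (fun z => a z < b z), (b z - a z) := by
    rw [← Finset.sum_filter_add_sum_filter_not Finset.univ (fun z => a z < b z)
      (fun z => b z - m z)]
    have e1 : ∑ z ∈ Finset.univ.filter (fun z => a z < b z), (b z - m z) =
        ∑ z ∈ Finset.univ.filter (fun z => a z < b z), (b z - a z) :=
      Finset.sum_congr rfl fun z hz => by
        rw [hm]; simp only
        rw [min_eq_left (le_of_lt (Finset.mem_filter.mp hz).2)]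
    have e2 : ∑ z ∈ Finset.univ.filter (fun z => ¬ a z < b z), (b z - m z) = 0 :=
      Finset.sum_eq_zero fun z hz => by
        have hle : b z ≤ a z := not_lt.mp (Finset.mem_filter.mp hz).2
        rw [hm]; simp only
        rw [min_eq_right hle, sub_self]
    rw [e1, e2, add_zero]
  have key : ∑ z, a z * f z - ∑ z, b z * g z =
      (∑ z, ((a z - m z) * f z - (b z - m z) * g z)) + ∑ z, m z * (f z - g z) := by
    rw [← Finset.sum_add_distrib, ← Finset.sum_sub_distrib]
    exact Finset.sum_congr rfl fun z _ => by ring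
  have h1 : |∑ z, ((a z - m z) * f z - (b z - m z) * g z)| ≤ T := by
    rw [abs_le]
    constructor
    · have hle : -(∑ z, ((a z - m z) * f z - (b z - m z) * g z)) ≤ ∑ z, (b z - m z) := by
        rw [← Finset.sum_neg_distrib]
        refine Finset.sum_le_sum fun z _ => ?_
        have hA : 0 ≤ (a z - m z) * f z := mul_nonneg (by linarith [hma z]) (hf0 z)
        have hB : (b z - m z) * g z ≤ (b z - m z) * 1 :=
          mul_le_mul_of_nonneg_left (hg1 z) (by linarith [hmb z])
        linarith
      rw [hsum_bm] at hle
      linarith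
    · have hle : ∑ z, ((a z - m z) * f z - (b z - m z) * g z) ≤ ∑ z, (a z - m z) := by
        refine Finset.sum_le_sum fun z _ => ?_
        have hA : (a z - m z) * f z ≤ (a z - m z) * 1 :=
          mul_le_mul_of_nonneg_left (hf1 z) (by linarith [hma z])
        have hB : 0 ≤ (b z - m z) * g z := mul_nonneg (by linarith [hmb z]) (hg0 z)
        linarith
      rw [hsum_am] at hle
      linarith
  have h2 : |∑ z, m z * (f z - g z)| ≤ ∑ z, m z * tz z := by
    refine (Finset.abs_sum_le_sum_abs _ _).trans (Finset.sum_le_sum fun z _ => ?_)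
    rw [abs_mul, abs_of_nonneg (hm0 z)]
    exact mul_le_mul_of_nonneg_left (htz z) (hm0 z)
  calc |∑ z, a z * f z - ∑ z, b z * g z|
      ≤ |∑ z, ((a z - m z) * f z - (b z - m z) * g z)| + |∑ z, m z * (f z - g z)| := by
        rw [key]; exact abs_add_le _ _
    _ ≤ T + ∑ z, m z * tz z := add_le_add h1 h2

/-- Conditional decomposition of total variation on `𝒵 × 𝒲` with `𝒵` finite
(discrete): writing `P = Σ_z P_Z(z) · (δ_z ⊗ P_{W|Z=z})` and likewise for `Q`,
`TV(P,Q) ≤ TV(P_Z,Q_Z) + Σ_z min{P_Z(z),Q_Z(z)} · TV(P_{W|Z=z}, Q_{W|Z=z})`. -/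
theorem tv_conditional_decomposition {𝒵 𝒲 : Type*} [Fintype 𝒵]
    [MeasurableSpace 𝒵] [MeasurableSingletonClass 𝒵] [MeasurableSpace 𝒲]
    (P Q : Measure (𝒵 × 𝒲)) [IsProbabilityMeasure P] [IsProbabilityMeasure Q]
    (pZ qZ : 𝒵 → ENNReal) (PW QW : 𝒵 → Measure 𝒲)
    [∀ z, IsProbabilityMeasure (PW z)] [∀ z, IsProbabilityMeasure (QW z)]
    (hP : P = ∑ z : 𝒵, pZ z • (Measure.dirac z).prod (PW z))
    (hQ : Q = ∑ z : 𝒵, qZ z • (Measure.dirac z).prod (QW z)) :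
    tvDist P Q ≤ tvDist (P.map Prod.fst) (Q.map Prod.fst) +
      ∑ z : 𝒵, (min (pZ z) (qZ z)).toReal * tvDist (PW z) (QW z) := by
  classical
  -- value of P on a measurable set
  have happ : ∀ (p : 𝒵 → ENNReal) (M : 𝒵 → Measure 𝒲), (∀ z, SFinite (M z)) →
      ∀ s : Set (𝒵 × 𝒲), MeasurableSet s →
      (∑ z : 𝒵, p z • (Measure.dirac z).prod (M z)) s =
        ∑ z : 𝒵, p z * M z (Prod.mk z ⁻¹' s) := by
    intro p M hM s hs
    rw [Measure.finset_sum_apply]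
    refine Finset.sum_congr rfl fun z _ => ?_
    have := hM z
    rw [Measure.smul_apply, Measure.dirac_prod,
      Measure.map_apply measurable_prodMk_left hs, smul_eq_mul]
  have hPapp : ∀ s : Set (𝒵 × 𝒲), MeasurableSet s →
      P s = ∑ z : 𝒵, pZ z * PW z (Prod.mk z ⁻¹' s) := fun s hs => by
    rw [hP]; exact happ pZ PW (fun z => inferInstance) s hs
  have hQapp : ∀ s : Set (𝒵 × 𝒲), MeasurableSet s →
      Q s = ∑ z : 𝒵, qZ z * QW z (Prod.mk z ⁻¹' s) := fun s hs => by
    rw [hQ]; exact happ qZ QW (fun z => inferInstance) s hs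
  -- total masses
  have hpsum : ∑ z : 𝒵, pZ z = 1 := by
    have h := measure_univ (μ := P)
    rw [hPapp Set.univ MeasurableSet.univ] at h
    simpa using h
  have hqsum : ∑ z : 𝒵, qZ z = 1 := by
    have h := measure_univ (μ := Q)
    rw [hQapp Set.univ MeasurableSet.univ] at h
    simpa using h
  have hple : ∀ z, pZ z ≤ 1 := fun z =>
    (Finset.single_le_sum (fun i _ => (zero_le : 0 ≤ pZ i)) (Finset.mem_univ z)).trans_eq hpsum
  have hqle : ∀ z, qZ z ≤ 1 := fun z =>
    (Finset.single_le_sum (fun i _ => (zero_le : 0 ≤ qZ i)) (Finset.mem_univ z)).trans_eq hqsum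
  have hpne : ∀ z, pZ z ≠ ⊤ := fun z => ne_top_of_le_ne_top ENNReal.one_ne_top (hple z)
  have hqne : ∀ z, qZ z ≠ ⊤ := fun z => ne_top_of_le_ne_top ENNReal.one_ne_top (hqle z)
  -- real-valued weights
  set a : 𝒵 → ℝ := fun z => (pZ z).toReal with ha_def
  set b : 𝒵 → ℝ := fun z => (qZ z).toReal with hb_def
  have ha0 : ∀ z, 0 ≤ a z := fun z => ENNReal.toReal_nonneg
  have hb0 : ∀ z, 0 ≤ b z := fun z => ENNReal.toReal_nonneg
  -- every subset of 𝒵 is measurable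
  have hAmeas : ∀ p : 𝒵 → Prop, MeasurableSet {z | p z} := fun p =>
    (Set.toFinite _).measurableSet
  -- marginal values
  have hmarg : ∀ (p : 𝒵 → ENNReal) (M : 𝒵 → Measure 𝒲), (∀ z, IsProbabilityMeasure (M z)) →
      (∀ st : Set (𝒵 × 𝒲), MeasurableSet st →
        (∑ z : 𝒵, p z • (Measure.dirac z).prod (M z)) st = ∑ z : 𝒵, p z * M z (Prod.mk z ⁻¹' st)) →
      (∀ z, p z ≠ ⊤) →
      ∀ (pr : 𝒵 → Prop) [DecidablePred pr],
      (((∑ z : 𝒵, p z • (Measure.dirac z).prod (M z)) : Measure (𝒵 × 𝒲)).map Prod.fst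
          {z | pr z}).toReal = ∑ z ∈ Finset.univ.filter pr, (p z).toReal := by
    intro p M hM happ' hpne' pr _
    rw [Measure.map_apply measurable_fst (hAmeas pr),
      happ' _ (measurable_fst (hAmeas pr))]
    have hpre : ∀ z : 𝒵, p z * M z (Prod.mk z ⁻¹' (Prod.fst ⁻¹' {z | pr z})) =
        if pr z then p z else 0 := by
      intro z
      have := hM z
      by_cases hz : pr z
      · have h : (Prod.mk z ⁻¹' (Prod.fst ⁻¹' {z | pr z}) : Set 𝒲) = Set.univ := by ext w; simp [hz]
        simp [h, hz]
      · have h : (Prod.mk z ⁻¹' (Prod.fst ⁻¹' {z | pr z}) : Set 𝒲) = ∅ := by ext w; simp [hz]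
        simp [h, hz]
    simp_rw [hpre]
    rw [← Finset.sum_filter, ENNReal.toReal_sum (fun z _ => hpne' z)]
  have hmargP : ∀ (pr : 𝒵 → Prop) [DecidablePred pr],
      ((P.map Prod.fst) {z | pr z}).toReal = ∑ z ∈ Finset.univ.filter pr, a z := by
    intro pr _
    rw [hP]
    exact hmarg pZ PW inferInstance (fun st hst => by rw [← hP]; exact hPapp st hst) hpne pr
  have hmargQ : ∀ (pr : 𝒵 → Prop) [DecidablePred pr],
      ((Q.map Prod.fst) {z | pr z}).toReal = ∑ z ∈ Finset.univ.filter pr, b z := by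
    intro pr _
    rw [hQ]
    exact hmarg qZ QW inferInstance (fun st hst => by rw [← hQ]; exact hQapp st hst) hqne pr
  -- probability instances for the marginals
  haveI : IsProbabilityMeasure (P.map Prod.fst) :=
    Measure.isProbabilityMeasure_map measurable_fst.aemeasurable
  haveI : IsProbabilityMeasure (Q.map Prod.fst) :=
    Measure.isProbabilityMeasure_map measurable_fst.aemeasurable
  -- the two T-bounds
  have hT1 : ∑ z ∈ Finset.univ.filter (fun z => b z < a z), (a z - b z) ≤
      tvDist (P.map Prod.fst) (Q.map Prod.fst) := by
    rw [Finset.sum_sub_distrib, ← hmargP (fun z => b z < a z), ← hmargQ (fun z => b z < a z)]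
    exact (le_abs_self _).trans (le_tvDist _ _ (hAmeas _))
  have hT2 : ∑ z ∈ Finset.univ.filter (fun z => a z < b z), (b z - a z) ≤
      tvDist (P.map Prod.fst) (Q.map Prod.fst) := by
    rw [Finset.sum_sub_distrib, ← hmargQ (fun z => a z < b z), ← hmargP (fun z => a z < b z)]
    refine le_trans ?_ (le_tvDist (P.map Prod.fst) (Q.map Prod.fst) (hAmeas (fun z => a z < b z)))
    rw [abs_sub_comm]
    exact le_abs_self _
  -- rewrite the mins
  have hmin : ∀ z, (min (pZ z) (qZ z)).toReal = min (a z) (b z) := fun z =>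
    ENNReal.toReal_min (hpne z) (hqne z)
  simp_rw [hmin]
  -- bound the supremum
  haveI : Nonempty {s : Set (𝒵 × 𝒲) // MeasurableSet s} := ⟨⟨∅, MeasurableSet.empty⟩⟩
  refine ciSup_le fun s => ?_
  obtain ⟨s, hs⟩ := s
  set f : 𝒵 → ℝ := fun z => ((PW z) (Prod.mk z ⁻¹' s)).toReal with hf_def
  set g : 𝒵 → ℝ := fun z => ((QW z) (Prod.mk z ⁻¹' s)).toReal with hg_def
  have hPs : (P s).toReal = ∑ z, a z * f z := by
    rw [hPapp s hs, ENNReal.toReal_sum (fun z _ =>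
      ENNReal.mul_ne_top (hpne z) (measure_ne_top _ _))]
    exact Finset.sum_congr rfl fun z _ => ENNReal.toReal_mul
  have hQs : (Q s).toReal = ∑ z, b z * g z := by
    rw [hQapp s hs, ENNReal.toReal_sum (fun z _ =>
      ENNReal.mul_ne_top (hqne z) (measure_ne_top _ _))]
    exact Finset.sum_congr rfl fun z _ => ENNReal.toReal_mul
  rw [hPs, hQs]
  refine real_key a b f g (fun z => tvDist (PW z) (QW z)) _ ha0 hb0
    (fun z => ENNReal.toReal_nonneg)
    (fun z => by
      simpa using ENNReal.toReal_mono ENNReal.one_ne_top (prob_le_one (μ := PW z)))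
    (fun z => ENNReal.toReal_nonneg)
    (fun z => by
      simpa using ENNReal.toReal_mono ENNReal.one_ne_top (prob_le_one (μ := QW z)))
    hT1 hT2
    (fun z => le_tvDist (PW z) (QW z) (hs.preimage measurable_prodMk_left))
end

section
/- (TV between scaled uniform intervals) Let B, B', ε > 0 and let P = Unif([B, (1+ε)B]) and Q = Unif([B', (1+ε)B']). Then TV(P, Q) ≤ ((1+ε)/ε) · |1 − B'/B|. -/
open MeasureTheory

/-- The uniform probability distribution on the interval `[a, b]`. -/
noncomputable def unifIcc (a b : ℝ) : Measure ℝ :=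
  (ENNReal.ofReal (b - a))⁻¹ • volume.restrict (Set.Icc a b)

lemma unifIcc_toReal (a b : ℝ) (hab : 0 < b - a) (s : Set ℝ) (hs : MeasurableSet s) :
    (unifIcc a b s).toReal = (volume (s ∩ Set.Icc a b)).toReal / (b - a) := by
  rw [unifIcc, Measure.smul_apply, Measure.restrict_apply hs, smul_eq_mul,
    ENNReal.toReal_mul, ENNReal.toReal_inv, ENNReal.toReal_ofReal hab.le,
    inv_mul_eq_div]

lemma key_bound (B B' ε : ℝ) (hB : 0 < B) (hB' : 0 < B') (hε : 0 < ε) (hle : B ≤ B')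
    (s : Set ℝ) (hs : MeasurableSet s) :
    |(unifIcc B ((1 + ε) * B) s).toReal - (unifIcc B' ((1 + ε) * B') s).toReal| ≤
      (1 + ε) * (B' - B) / (ε * B') := by
  have hεB : (0:ℝ) < ε * B := by positivity
  have hεB' : (0:ℝ) < ε * B' := by positivity
  have hab : (0:ℝ) < (1 + ε) * B - B := by nlinarith
  have hab' : (0:ℝ) < (1 + ε) * B' - B' := by nlinarith
  set I := Set.Icc B ((1 + ε) * B) with hI
  set I' := Set.Icc B' ((1 + ε) * B') with hI'
  set x := (volume (s ∩ I)).toReal with hxdef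
  set y := (volume (s ∩ I')).toReal with hydef
  set z := (volume (s ∩ I ∩ I')).toReal with hzdef
  have hfinI : volume I ≠ ⊤ := by rw [hI]; exact measure_Icc_lt_top.ne
  have hfinI' : volume I' ≠ ⊤ := by rw [hI']; exact measure_Icc_lt_top.ne
  have hfinx : volume (s ∩ I) ≠ ⊤ :=
    ((measure_mono Set.inter_subset_right).trans_lt (lt_top_iff_ne_top.2 hfinI)).ne
  have hfiny : volume (s ∩ I') ≠ ⊤ :=
    ((measure_mono Set.inter_subset_right).trans_lt (lt_top_iff_ne_top.2 hfinI')).ne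
  -- basic real inequalities
  have hx0 : 0 ≤ x := ENNReal.toReal_nonneg
  have hy0 : 0 ≤ y := ENNReal.toReal_nonneg
  have hz0 : 0 ≤ z := ENNReal.toReal_nonneg
  have hzx : z ≤ x := ENNReal.toReal_mono hfinx (measure_mono Set.inter_subset_left)
  have hzy : z ≤ y := by
    refine ENNReal.toReal_mono hfiny (measure_mono ?_)
    exact fun t ht => ⟨ht.1.1, ht.2⟩
  have hxI : x ≤ ε * B := by
    have h1 : volume (s ∩ I) ≤ volume I := measure_mono Set.inter_subset_right
    have h2 : (volume I).toReal = ε * B := by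
      rw [hI, Real.volume_Icc, ENNReal.toReal_ofReal hab.le]; ring
    have := ENNReal.toReal_mono hfinI h1
    linarith [h2 ▸ this]
  have hxsplit : x ≤ z + (B' - B) := by
    have hsub : s ∩ I ⊆ (s ∩ I ∩ I') ∪ Set.Ico B B' := by
      rintro t ⟨hts, htI⟩
      by_cases htI' : t ∈ I'
      · exact Or.inl ⟨⟨hts, htI⟩, htI'⟩
      · refine Or.inr ⟨htI.1, ?_⟩
        by_contra hlt
        push_neg at hlt
        refine htI' ⟨hlt, ?_⟩
        calc t ≤ (1 + ε) * B := htI.2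
          _ ≤ (1 + ε) * B' := by nlinarith
    have h1 : volume (s ∩ I) ≤ volume (s ∩ I ∩ I') + volume (Set.Ico B B') :=
      (measure_mono hsub).trans (measure_union_le _ _)
    have hfz : volume (s ∩ I ∩ I') ≠ ⊤ :=
      ((measure_mono (Set.inter_subset_left.trans Set.inter_subset_right)).trans_lt
        (lt_top_iff_ne_top.2 hfinI)).ne
    have h2 := ENNReal.toReal_mono (by
      refine ENNReal.add_ne_top.2 ⟨hfz, ?_⟩
      rw [Real.volume_Ico]; exact ENNReal.ofReal_ne_top) h1
    rw [ENNReal.toReal_add hfz (by rw [Real.volume_Ico]; exact ENNReal.ofReal_ne_top),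
      Real.volume_Ico, ENNReal.toReal_ofReal (by linarith)] at h2
    exact h2
  have hysplit : y ≤ z + ((1 + ε) * B' - (1 + ε) * B) := by
    have hsub : s ∩ I' ⊆ (s ∩ I ∩ I') ∪ Set.Ioc ((1 + ε) * B) ((1 + ε) * B') := by
      rintro t ⟨hts, htI'⟩
      by_cases htI : t ∈ I
      · exact Or.inl ⟨⟨hts, htI⟩, htI'⟩
      · refine Or.inr ⟨?_, htI'.2⟩
        by_contra hlt
        push_neg at hlt
        exact htI ⟨hle.trans htI'.1, hlt⟩
    have h1 : volume (s ∩ I') ≤ volume (s ∩ I ∩ I') + volume (Set.Ioc ((1 + ε) * B) ((1 + ε) * B')) :=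
      (measure_mono hsub).trans (measure_union_le _ _)
    have hfz : volume (s ∩ I ∩ I') ≠ ⊤ :=
      ((measure_mono (Set.inter_subset_left.trans Set.inter_subset_right)).trans_lt
        (lt_top_iff_ne_top.2 hfinI)).ne
    have h2 := ENNReal.toReal_mono (by
      refine ENNReal.add_ne_top.2 ⟨hfz, ?_⟩
      rw [Real.volume_Ioc]; exact ENNReal.ofReal_ne_top) h1
    rw [ENNReal.toReal_add hfz (by rw [Real.volume_Ioc]; exact ENNReal.ofReal_ne_top),
      Real.volume_Ioc, ENNReal.toReal_ofReal (by nlinarith)] at h2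
    exact h2
  -- rewrite measures to real fractions
  rw [unifIcc_toReal B ((1 + ε) * B) hab s hs, unifIcc_toReal B' ((1 + ε) * B') hab' s hs]
  have e1 : (1 + ε) * B - B = ε * B := by ring
  have e2 : (1 + ε) * B' - B' = ε * B' := by ring
  rw [e1, e2, ← hxdef, ← hydef]
  -- the numerator bound
  have hnum : |x * B' - y * B| ≤ (1 + ε) * (B' - B) * B := by
    rw [abs_le]
    constructor
    · -- lower bound:  y*B - x*B' ≤ (1+ε)*(B'-B)*B
      have p4 : (z + ((1 + ε) * B' - (1 + ε) * B) - y) * B ≥ 0 :=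
        mul_nonneg (by linarith) hB.le
      have p5 : (x - z) * B' ≥ 0 := mul_nonneg (by linarith) hB'.le
      have p6 : z * (B' - B) ≥ 0 := mul_nonneg hz0 (by linarith)
      nlinarith [p4, p5, p6]
    · rcases le_or_gt B' ((1 + ε) * B) with hcase | hcase
      · have hzsmall : z ≤ (1 + ε) * B - B' := by
          have hsub : s ∩ I ∩ I' ⊆ Set.Icc B' ((1 + ε) * B) :=
            fun t ht => ⟨ht.2.1, ht.1.2.2⟩
          have h1 := ENNReal.toReal_mono (by
            rw [Real.volume_Icc]; exact ENNReal.ofReal_ne_top) (measure_mono hsub)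
          rw [Real.volume_Icc, ENNReal.toReal_ofReal (by linarith)] at h1
          exact h1
        have p1 : (y - z) * B ≥ 0 := mul_nonneg (by linarith) hB.le
        have p2 : (z + (B' - B) - x) * B' ≥ 0 := mul_nonneg (by linarith) hB'.le
        have p3 : ((1 + ε) * B - B' - z) * (B' - B) ≥ 0 :=
          mul_nonneg (by linarith) (by linarith)
        nlinarith [p1, p2, p3]
      · have p1 : (ε * B - x) * B' ≥ 0 := mul_nonneg (by linarith) hB'.le
        have p2 : y * B ≥ 0 := mul_nonneg hy0 hB.le
        have p3 : B * (B' - (1 + ε) * B) ≥ 0 := mul_nonneg hB.le (by linarith)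
        nlinarith [p1, p2, p3]
  have hd : x / (ε * B) - y / (ε * B') = (x * B' - y * B) / (ε * B * B') := by
    field_simp
  rw [hd, abs_div, abs_of_pos (by positivity : (0:ℝ) < ε * B * B'),
    div_le_div_iff₀ (by positivity) (by positivity)]
  calc |x * B' - y * B| * (ε * B') ≤ ((1 + ε) * (B' - B) * B) * (ε * B') :=
        mul_le_mul_of_nonneg_right hnum (by positivity)
    _ = (1 + ε) * (B' - B) * (ε * B * B') := by ring

/-- TV between scaled uniform intervals: for `B, B', ε > 0`,
`TV(Unif([B,(1+ε)B]), Unif([B',(1+ε)B'])) ≤ ((1+ε)/ε)·|1 − B'/B|`. -/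
theorem tv_uniform_scaled_intervals (B B' ε : ℝ)
    (hB : 0 < B) (hB' : 0 < B') (hε : 0 < ε) :
    tvDist (unifIcc B ((1 + ε) * B)) (unifIcc B' ((1 + ε) * B')) ≤
      ((1 + ε) / ε) * |1 - B' / B| := by
  haveI : Nonempty {s : Set ℝ // MeasurableSet s} := ⟨⟨∅, MeasurableSet.empty⟩⟩
  unfold tvDist
  apply ciSup_le
  rintro ⟨s, hs⟩
  rcases le_total B B' with h | h
  · have hkey := key_bound B B' ε hB hB' hε h s hs
    have habs : |1 - B' / B| = (B' - B) / B := by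
      rw [abs_of_nonpos (by rw [sub_nonpos]; exact (one_le_div hB).2 h)]
      field_simp
      ring
    rw [habs]
    refine hkey.trans ?_
    rw [div_le_iff₀ (by positivity)]
    have hq : (1 + ε) / ε * ((B' - B) / B) * (ε * B') = (1 + ε) * (B' - B) * (B' / B) := by
      field_simp
    rw [hq]
    nlinarith [mul_nonneg (mul_nonneg (by linarith : (0:ℝ) ≤ 1 + ε) (by linarith : (0:ℝ) ≤ B' - B)) (sub_nonneg.2 ((one_le_div hB).2 h))]
  · have hkey := key_bound B' B ε hB' hB hε h s hs
    rw [abs_sub_comm] at hkey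
    have habs : |1 - B' / B| = (B - B') / B := by
      rw [abs_of_nonneg (by rw [sub_nonneg]; exact (div_le_one hB).2 h)]
      field_simp
    rw [habs]
    refine hkey.trans (le_of_eq ?_)
    field_simp
end

section
/- (ℓ1 stability of normalized ratio weights under removing one element) Let E be a finite set, and for each pair (u,v) in a finite index set I, let g^f_{u→v} ≥ 0 for f ∈ E. Define ρ_f = Σ_{(u,v)∈I} g^f_{u→v} / Σ_{f'∈E} g^{f'}_{u→v} (with the convention 0/0 = 0). Fix e ∈ E and let ρ_f^{(−e)} denote the analogous quantity computed with e removed from E. Then Σ_{f∈E, f≠e} |ρ_f − ρ_f^{(−e)}| ≤ ρ_e. -/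
open Finset

/-- ℓ1 stability of normalized ratio weights under removing one element:
with `ρ_f = Σ_{p∈I} g^f_p / Σ_{f'∈E} g^{f'}_p` (convention `0/0 = 0`, which is
Lean's division by zero) and `ρ_f^{(−e)}` the analogous quantity with `e` removed,
`Σ_{f≠e} |ρ_f − ρ_f^{(−e)}| ≤ ρ_e`. -/
theorem l1_stability_ratio_weights {F ι : Type*} [DecidableEq F]
    (E : Finset F) (I : Finset ι) (g : F → ι → ℝ)
    (hg : ∀ f p, 0 ≤ g f p) (e : F) (he : e ∈ E) :
    ∑ f ∈ E.erase e,
        |(∑ p ∈ I, g f p / ∑ f' ∈ E, g f' p) -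
          (∑ p ∈ I, g f p / ∑ f' ∈ E.erase e, g f' p)| ≤
      ∑ p ∈ I, g e p / ∑ f' ∈ E, g f' p := by
  classical
  set S : ι → ℝ := fun p => ∑ f' ∈ E, g f' p with hS
  set S' : ι → ℝ := fun p => ∑ f' ∈ E.erase e, g f' p with hS'
  have hS'nonneg : ∀ p, 0 ≤ S' p := fun p => Finset.sum_nonneg fun f _ => hg f p
  have hSS' : ∀ p, S p = S' p + g e p := by
    intro p
    simp only [hS, hS']
    rw [Finset.sum_erase_add E _ he]
  have hterm : ∀ f ∈ E.erase e, ∀ p, g f p / S p ≤ g f p / S' p := by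
    intro f hf p
    rcases eq_or_lt_of_le (hS'nonneg p) with h0 | hpos
    · have hle : g f p ≤ S' p := Finset.single_le_sum (fun f' _ => hg f' p) hf
      have : g f p = 0 := le_antisymm (by linarith [h0]) (hg f p)
      simp [this]
    · have hle : S' p ≤ S p := by rw [hSS' p]; linarith [hg e p]
      exact div_le_div_of_nonneg_left (hg f p) hpos hle
  have key : ∀ f ∈ E.erase e,
      |(∑ p ∈ I, g f p / S p) - (∑ p ∈ I, g f p / S' p)| ≤
        ∑ p ∈ I, (g f p / S' p - g f p / S p) := by
    intro f hf
    rw [abs_sub_comm, ← Finset.sum_sub_distrib, abs_of_nonneg]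
    exact Finset.sum_nonneg fun p _ => sub_nonneg.2 (hterm f hf p)
  calc ∑ f ∈ E.erase e,
        |(∑ p ∈ I, g f p / S p) - (∑ p ∈ I, g f p / S' p)|
      ≤ ∑ f ∈ E.erase e, ∑ p ∈ I, (g f p / S' p - g f p / S p) :=
        Finset.sum_le_sum key
    _ = ∑ p ∈ I, (S' p / S' p - S' p / S p) := by
        rw [Finset.sum_comm]
        refine Finset.sum_congr rfl fun p _ => ?_
        rw [Finset.sum_sub_distrib, ← Finset.sum_div, ← Finset.sum_div]
    _ ≤ ∑ p ∈ I, g e p / S p := by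
        refine Finset.sum_le_sum fun p _ => ?_
        rcases eq_or_lt_of_le (hS'nonneg p) with h0 | hpos
        · simp [← h0]
          exact div_nonneg (hg e p) (by rw [hSS' p, ← h0]; simpa using hg e p)
        · have hSpos : 0 < S p := by rw [hSS' p]; linarith [hg e p]
          rw [div_self (ne_of_gt hpos)]
          rw [hSS' p]
          have hpos2 : 0 < S' p + g e p := by rw [← hSS' p]; exact hSpos
          have : S' p / (S' p + g e p) + g e p / (S' p + g e p) = 1 := by
            rw [← add_div, div_self (ne_of_gt hpos2)]
          linarith
end
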